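/- For every nonnegative integer n, every nonnegative integer r, and every real x, one has B_n^{(c,r)}(x) = ∑_{l=0}^{n} C(n,l) · B_{n-l}^{(c)}(x) · r^l. -/

import Mathlib

/-- The central factorial numbers of the second kind:
`T(n,k) = (1/k!) ∑_{j=0}^{k} (-1)^{k-j} C(k,j) (j - k/2)^n`. -/
noncomputable def centralT (n k : ℕ) : ℝ :=
  (1 / (Nat.factorial k : ℝ)) * ∑ j ∈ Finset.range (k + 1),
    (-1 : ℝ) ^ (k - j) * (Nat.choose k j : ℝ) * ((j : ℝ) - (k : ℝ) / 2) ^ n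

/-- The extended `r`-central factorial numbers of the second kind:
`T_r(n+r,k+r) = (1/k!) ∑_{j=0}^{k} (-1)^{k-j} C(k,j) (j + r - k/2)^n`. -/
noncomputable def rcentralT (r n k : ℕ) : ℝ :=
  (1 / (Nat.factorial k : ℝ)) * ∑ j ∈ Finset.range (k + 1),
    (-1 : ℝ) ^ (k - j) * (Nat.choose k j : ℝ) * ((j : ℝ) + (r : ℝ) - (k : ℝ) / 2) ^ n

/-- The central Bell polynomials: `B_n^{(c)}(x) = ∑_{k=0}^{n} T(n,k) x^k`. -/
noncomputable def centralBell (n : ℕ) (x : ℝ) : ℝ :=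
  ∑ k ∈ Finset.range (n + 1), centralT n k * x ^ k

/-- The extended `r`-central Bell polynomials: `B_n^{(c,r)}(x) = ∑_{k=0}^{n} T_r(n+r,k+r) x^k`. -/
noncomputable def rcentralBell (r n : ℕ) (x : ℝ) : ℝ :=
  ∑ k ∈ Finset.range (n + 1), rcentralT r n k * x ^ k

/-! The `r`-shift only moves the evaluation points `j - k/2` of the alternating sum defining
`T(n,k)` to `j - k/2 + r`, so expanding `(j - k/2 + r)^n` binomially gives
`T_r(n+r,k+r) = ∑_l C(n,l) T(n-l,k) r^l`. Summing against `x^k` yields the theorem once the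
range of `k` is cut down to `0..n-l`, which is legitimate because `T(m,k)`, a `k`-th forward
difference of a polynomial of degree `m`, vanishes for `k > m`. -/

theorem sum_range_neg_one_pow_mul_choose_mul_add_pow_eq_zero {R : Type*} [CommRing R]
    {k m : ℕ} (hm : m < k) (c : R) :
    ∑ j ∈ Finset.range (k + 1), (-1 : R) ^ (k - j) * (k.choose j : R) * ((j : R) + c) ^ m = 0 := by
  have h := fwdDiff_iter_eq_sum_shift (1 : R) (fun y : R => y ^ m) k c
  rw [fwdDiff_iter_pow_eq_zero_of_lt hm, Pi.zero_apply] at h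
  rw [h]
  refine Finset.sum_congr rfl fun j _ => ?_
  simp only [zsmul_eq_mul, nsmul_eq_mul, mul_one]
  push_cast
  ring

theorem centralT_eq_zero_of_lt {n k : ℕ} (h : n < k) : centralT n k = 0 := by
  have hsum := sum_range_neg_one_pow_mul_choose_mul_add_pow_eq_zero h (-(k : ℝ) / 2)
  rw [centralT, mul_eq_zero, ← hsum]
  refine Or.inr <| Finset.sum_congr rfl fun j _ => by ring

theorem rcentralT_eq_sum_centralT (r n k : ℕ) :
    rcentralT r n k
      = ∑ l ∈ Finset.range (n + 1), (n.choose l : ℝ) * centralT (n - l) k * (r : ℝ) ^ l := by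
  have hpow : ∀ j : ℕ, ((j : ℝ) + r - k / 2) ^ n
      = ∑ l ∈ Finset.range (n + 1), (r : ℝ) ^ l * ((j : ℝ) - k / 2) ^ (n - l) * n.choose l := by
    intro j
    rw [← add_pow]
    ring
  simp_rw [rcentralT, centralT, hpow, Finset.mul_sum, Finset.sum_mul]
  rw [Finset.sum_comm]
  exact Finset.sum_congr rfl fun l _ => Finset.sum_congr rfl fun j _ => by ring

theorem centralBell_eq_sum_range_of_le {n N : ℕ} (h : n ≤ N) (x : ℝ) :
    centralBell n x = ∑ k ∈ Finset.range (N + 1), centralT n k * x ^ k := by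
  refine Finset.sum_subset (Finset.range_subset_range.mpr (by omega)) fun k _ hk => ?_
  rw [centralT_eq_zero_of_lt (by grind), zero_mul]

/-- For every nonnegative integer `n`, nonnegative integer `r` and real `x`:
`B_n^{(c,r)}(x) = ∑_{l=0}^{n} C(n,l) · B_{n-l}^{(c)}(x) · r^l`. -/
theorem rcentralBell_eq_sum_centralBell (n r : ℕ) (x : ℝ) :
    rcentralBell r n x =
      ∑ l ∈ Finset.range (n + 1),
        (Nat.choose n l : ℝ) * centralBell (n - l) x * (r : ℝ) ^ l := by
  simp_rw [rcentralBell, rcentralT_eq_sum_centralT, Finset.sum_mul]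
  rw [Finset.sum_comm]
  refine Finset.sum_congr rfl fun l _ => ?_
  rw [centralBell_eq_sum_range_of_le (Nat.sub_le n l), Finset.mul_sum, Finset.sum_mul]
  exact Finset.sum_congr rfl fun k _ => by ring
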